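/- arXiv:2406.19734 — 2 statements merged into one kernel-verified Lean document; each statement's English description precedes it below -/
import Mathlib

section
/- Let (λ_j)_{j≥1} be a nondecreasing sequence of positive reals with counting function N(λ) = #{j : λ_j ≤ λ} satisfying N(λ) ∼ C λ^α as λ → ∞ for some C, α > 0. Let f : ℝ⁺ → ℝ⁺ be a nonincreasing C¹ function such that f and f' decay faster than any polynomial at infinity. Then for every ε > 0 there exists K(ε) > 0, depending on N but not on f, such that |Σ_{j=1}^∞ f(λ_j) − Cα ∫_{λ₁}^∞ f(λ) λ^(α−1) dλ| ≤ K(ε) f(λ₁) + ε ∫_{λ₁}^∞ f(λ) λ^(α−1) dλ. -/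
open Real Set Filter Asymptotics MeasureTheory Topology
open scoped ENNReal

/-!
Write `N(t) = #{j | λ_j ≤ t}` and `g = -f' ≥ 0`. Since `f(λ_j) = ∫_{λ_j}^∞ g`, Tonelli gives
`Σ_j f(λ_j) = ∫_{λ₁}^∞ N g`, while integration by parts gives
`∫_{λ₁}^∞ C t^α g = C λ₁^α f(λ₁) + Cα ∫_{λ₁}^∞ f t^(α-1)`. Comparing the two integrands with
`|N(t) - C t^α| ≤ M + δ C t^α`, valid for all `t ≥ 0` once `N ∼ C t^α` (with `M` depending only on
`N` and `δ`), and taking `δ = ε / (Cα)` gives the estimate with `K = M + (1 + δ) C λ₁^α + 1`.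
-/

namespace Asymptotics.SuperpolynomialDecay

variable {f : ℝ → ℝ}

theorem tendsto_zero_atTop (hf : SuperpolynomialDecay atTop id f) :
    Tendsto f atTop (𝓝 0) := by
  simpa using hf 0

theorem param_rpow_mul (hf : SuperpolynomialDecay atTop id f) (β : ℝ) :
    SuperpolynomialDecay atTop id (fun x => x ^ β * f x) := by
  refine (hf.param_pow_mul ⌈β⌉₊).trans_eventually_abs_le ?_
  filter_upwards [eventually_ge_atTop 1] with x hx
  have hx0 : 0 ≤ x := zero_le_one.trans hx
  simp only [Function.comp_apply, Pi.mul_apply, Pi.pow_apply, id, abs_mul,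
    abs_of_nonneg (rpow_nonneg hx0 β), abs_of_nonneg (pow_nonneg hx0 _)]
  gcongr
  exact (rpow_le_rpow_of_exponent_le hx (Nat.le_ceil β)).trans_eq (rpow_natCast x _)

theorem integrableOn_Ioi (hf : SuperpolynomialDecay atTop id f) {a : ℝ}
    (hc : ContinuousOn f (Ici a)) : IntegrableOn f (Ioi a) := by
  have hO : f =O[atTop] fun x : ℝ => x ^ (-2 : ℝ) := by
    simpa [← rpow_intCast] using (superpolynomialDecay_iff_isBigO f tendsto_id).1 hf (-2)
  refine ((hc.locallyIntegrableOn measurableSet_Ici).integrableOn_of_isBigO_atTop hO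
    (integrableAtFilter_rpow_atTop_iff.2 (by norm_num))).mono_set Ioi_subset_Ici_self

end Asymptotics.SuperpolynomialDecay

theorem continuousOn_rpow_const_Ici {a : ℝ} (ha : 0 < a) (β : ℝ) :
    ContinuousOn (fun t : ℝ => t ^ β) (Ici a) :=
  continuousOn_id.rpow_const fun _ hx => Or.inl (ha.trans_le hx).ne'

section Decay

variable {f : ℝ → ℝ} (hf : ContDiff ℝ 1 f) (hd : SuperpolynomialDecay atTop id f)
  (hd' : SuperpolynomialDecay atTop id (deriv f))
include hf hd hd'

theorem integral_Ioi_neg_deriv (b : ℝ) : ∫ t in Ioi b, -deriv f t = f b := by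
  rw [integral_neg, integral_Ioi_of_hasDerivAt_of_tendsto hf.continuous.continuousWithinAt
    (fun x _ => ((hf.differentiable one_ne_zero) x).hasDerivAt)
    (hd'.integrableOn_Ioi (hf.continuous_deriv le_rfl).continuousOn)
    hd.tendsto_zero_atTop, zero_sub, neg_neg]

theorem integral_Ioi_rpow_mul_neg_deriv {a : ℝ} (ha : 0 < a) (α : ℝ) :
    ∫ t in Ioi a, t ^ α * -deriv f t = a ^ α * f a + α * ∫ t in Ioi a, f t * t ^ (α - 1) := by
  have hparts := integral_Ioi_mul_deriv_eq_deriv_mul (a' := a ^ α * f a) (b' := 0)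
    (u := fun t => t ^ α) (v := f) (u' := fun t => α * t ^ (α - 1))
    (fun x hx => hasDerivAt_rpow_const (Or.inl (ha.trans hx).ne'))
    (fun x _ => ((hf.differentiable one_ne_zero) x).hasDerivAt)
    ((hd'.param_rpow_mul α).integrableOn_Ioi
      ((continuousOn_rpow_const_Ici ha α).mul (hf.continuous_deriv le_rfl).continuousOn))
    ((((hd.param_rpow_mul (α - 1)).integrableOn_Ioi
      ((continuousOn_rpow_const_Ici ha _).mul hf.continuous.continuousOn)).const_mul α).congr
      (ae_of_all _ fun t => by simp only [Pi.mul_apply]; ring))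
    (((continuousAt_rpow_const a α (Or.inl ha.ne')).mul
      hf.continuous.continuousAt).tendsto.mono_left nhdsWithin_le_nhds)
    (hd.param_rpow_mul α).tendsto_zero_atTop
  simp_rw [mul_neg, integral_neg, hparts, mul_assoc, integral_const_mul, mul_comm (f _)]
  ring

end Decay

noncomputable def countingFn (lam : ℕ → ℝ) (t : ℝ) : ℕ := Nat.card {j | lam j ≤ t}

section CountingFn

variable {lam : ℕ → ℝ}

-- `Nat.card` of an infinite set is `0`, so the finiteness has to come from the growth of `N`.
theorem finite_setOf_le_of_tendsto_countingFn (h : Tendsto (countingFn lam) atTop atTop)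
    (t : ℝ) : {j | lam j ≤ t}.Finite := by
  obtain ⟨s, hs, hts⟩ := ((h.eventually_ge_atTop 1).and (eventually_ge_atTop t)).exists
  refine (Set.finite_of_ncard_pos ?_).subset fun j hj => le_trans (α := ℝ) hj hts
  rwa [countingFn, Nat.card_coe_set_eq] at hs

theorem countingFn_mono (hfin : ∀ t, {j | lam j ≤ t}.Finite) : Monotone (countingFn lam) :=
  fun _ t hst => Nat.card_mono (hfin t) fun _ hj => le_trans (α := ℝ) hj hst

-- Off the range of `lam` the strict inequality `lam j < t` of `Ioi` agrees with the `≤` of `N`.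
theorem tsum_indicator_Ioi_eq_countingFn_mul (hfin : ∀ t, {j | lam j ≤ t}.Finite)
    {t : ℝ} (ht : t ∉ range lam) (G : ℝ → ℝ≥0∞) :
    ∑' j, (Ioi (lam j)).indicator G t = countingFn lam t * G t := by
  have hIoi : ∀ j, t ∈ Ioi (lam j) ↔ j ∈ {j | lam j ≤ t} := fun j =>
    ⟨fun h => le_of_lt (α := ℝ) h, fun h => lt_of_le_of_ne (α := ℝ) h fun he => ht ⟨j, he⟩⟩
  calc ∑' j, (Ioi (lam j)).indicator G t
      = ∑' j, {j | lam j ≤ t}.indicator (fun _ => G t) j := by simp only [indicator, hIoi]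
    _ = {j | lam j ≤ t}.encard * G t := by rw [← tsum_subtype, ENNReal.tsum_set_const]
    _ = countingFn lam t * G t := by
        rw [countingFn, Nat.card_coe_set_eq, ← (hfin t).cast_ncard_eq]; rfl

theorem tsum_setLIntegral_Ioi_eq_lintegral_countingFn_mul {μ : Measure ℝ}
    [NullSingletonClass μ] (hfin : ∀ t, {j | lam j ≤ t}.Finite) {G : ℝ → ℝ≥0∞}
    (hG : Measurable G) :
    ∑' j, ∫⁻ t in Ioi (lam j), G t ∂μ = ∫⁻ t, countingFn lam t * G t ∂μ := by
  simp_rw [← lintegral_indicator measurableSet_Ioi]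
  rw [← lintegral_tsum fun j => (hG.indicator measurableSet_Ioi).aemeasurable]
  refine lintegral_congr_ae ?_
  filter_upwards [measure_eq_zero_iff_ae_notMem.1 ((countable_range lam).measure_zero μ)]
    with t ht
  exact tsum_indicator_Ioi_eq_countingFn_mul hfin ht G

theorem tsum_setIntegral_Ioi_eq_setIntegral_countingFn_mul
    (hfin : ∀ t, {j | lam j ≤ t}.Finite) {a : ℝ} (ha : ∀ j, a ≤ lam j) {g : ℝ → ℝ}
    (hg : Measurable g) (hg0 : ∀ t ∈ Ioi a, 0 ≤ g t)
    (hint : IntegrableOn (fun t => countingFn lam t * g t) (Ioi a)) :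
    ∑' j, ∫ t in Ioi (lam j), g t = ∫ t in Ioi a, countingFn lam t * g t := by
  set μ := volume.restrict (Ioi a)
  have hterm : ∀ j, ∫ t in Ioi (lam j), g t
      = (∫⁻ t in Ioi (lam j), .ofReal (g t) ∂μ).toReal := by
    intro j
    rw [← integral_eq_lintegral_of_nonneg_ae
      (ae_restrict_of_ae (ae_restrict_of_forall_mem measurableSet_Ioi hg0))
      hg.aestronglyMeasurable, Measure.restrict_restrict measurableSet_Ioi, Ioi_inter_Ioi,
      sup_eq_left.2 (ha j)]
  have hsum := tsum_setLIntegral_Ioi_eq_lintegral_countingFn_mul (μ := μ) hfin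
    hg.ennreal_ofReal
  have hrhs : ∫⁻ t, countingFn lam t * .ofReal (g t) ∂μ
      = ∫⁻ t, .ofReal (countingFn lam t * g t) ∂μ := by
    simp_rw [ENNReal.ofReal_mul (Nat.cast_nonneg _), ENNReal.ofReal_natCast]
  have hfinite : ∑' j, ∫⁻ t in Ioi (lam j), .ofReal (g t) ∂μ ≠ ⊤ := by
    rw [hsum, hrhs]
    exact hint.lintegral_lt_top.ne
  rw [tsum_congr hterm, ← ENNReal.tsum_toReal_eq (ENNReal.ne_top_of_tsum_ne_top hfinite),
    hsum, hrhs, integral_eq_lintegral_of_nonneg_ae _ hint.aestronglyMeasurable]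
  exact ae_restrict_of_forall_mem measurableSet_Ioi fun t ht =>
    mul_nonneg (Nat.cast_nonneg _) (hg0 t ht)

end CountingFn

theorem Asymptotics.IsEquivalent.exists_abs_sub_le {u v : ℝ → ℝ} (huv : u ~[atTop] v)
    (hu : MonotoneOn u (Ici 0)) (hu0 : ∀ t ∈ Ici 0, 0 ≤ u t)
    (hv : MonotoneOn v (Ici 0)) (hv0 : ∀ t ∈ Ici 0, 0 ≤ v t) {δ : ℝ} (hδ : 0 < δ) :
    ∃ M, 0 ≤ M ∧ ∀ t ∈ Ici 0, |u t - v t| ≤ M + δ * v t := by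
  obtain ⟨Λ₀, hΛ₀⟩ := eventually_atTop.1 (huv.isLittleO.bound hδ)
  set Λ := max Λ₀ 0
  have hΛ : Λ ∈ Ici 0 := le_max_right Λ₀ 0
  refine ⟨u Λ + v Λ, add_nonneg (hu0 Λ hΛ) (hv0 Λ hΛ), fun t ht => ?_⟩
  have hδv : 0 ≤ δ * v t := mul_nonneg hδ.le (hv0 t ht)
  rcases le_total Λ t with hΛt | htΛ
  · have h := hΛ₀ t ((le_max_left _ _).trans hΛt)
    rw [Real.norm_eq_abs, Real.norm_eq_abs, abs_of_nonneg (hv0 t ht), Pi.sub_apply] at h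
    linarith [hu0 Λ hΛ, hv0 Λ hΛ]
  · have := hu ht hΛ htΛ
    have := hv ht hΛ htΛ
    rw [abs_sub_le_iff]
    constructor <;> linarith [hu0 t ht, hv0 t ht]

section IntegralBound

variable {X : Type*} [MeasurableSpace X] {μ : Measure X} {N P g : X → ℝ} {M δ : ℝ}

theorem integrable_mul_of_abs_sub_le (hN : AEStronglyMeasurable N μ)
    (hbound : ∀ᵐ x ∂μ, |N x - P x| ≤ M + δ * P x) (hg0 : ∀ᵐ x ∂μ, 0 ≤ g x)
    (hg : Integrable g μ) (hPg : Integrable (fun x => P x * g x) μ) :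
    Integrable (fun x => N x * g x) μ := by
  have hdom : Integrable (fun x => (M + δ * P x) * g x) μ :=
    ((hg.const_mul M).add (hPg.const_mul δ)).congr
      (ae_of_all _ fun x => by simp only [Pi.add_apply]; ring)
  have hdiff : Integrable (fun x => N x * g x - P x * g x) μ := by
    refine hdom.mono' ((hN.mul hg.aestronglyMeasurable).sub hPg.aestronglyMeasurable) ?_
    filter_upwards [hbound, hg0] with x hx hgx
    rw [Real.norm_eq_abs, ← sub_mul, abs_mul, abs_of_nonneg hgx]
    exact mul_le_mul_of_nonneg_right hx hgx
  exact (hdiff.add hPg).congr (ae_of_all _ fun x => by simp)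

theorem abs_integral_mul_sub_le (hN : AEStronglyMeasurable N μ)
    (hbound : ∀ᵐ x ∂μ, |N x - P x| ≤ M + δ * P x) (hg0 : ∀ᵐ x ∂μ, 0 ≤ g x)
    (hg : Integrable g μ) (hPg : Integrable (fun x => P x * g x) μ) :
    |∫ x, N x * g x ∂μ - ∫ x, P x * g x ∂μ|
      ≤ M * ∫ x, g x ∂μ + δ * ∫ x, P x * g x ∂μ := by
  have hNg := integrable_mul_of_abs_sub_le hN hbound hg0 hg hPg
  have hdom := (hg.const_mul M).add (hPg.const_mul δ)
  rw [← integral_sub hNg hPg, ← integral_const_mul, ← integral_const_mul,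
    ← integral_add (hg.const_mul M) (hPg.const_mul δ)]
  refine abs_integral_le_integral_abs.trans (integral_mono_ae (hNg.sub hPg).abs hdom ?_)
  filter_upwards [hbound, hg0] with x hx hgx
  rw [← sub_mul, abs_mul, abs_of_nonneg hgx]
  linarith [mul_le_mul_of_nonneg_right hx hgx]

end IntegralBound

theorem abs_tsum_sub_le_of_abs_countingFn_sub_le {lam : ℕ → ℝ}
    (hfin : ∀ t, {j | lam j ≤ t}.Finite) {a : ℝ} (ha : 0 < a) (hlam : ∀ j, a ≤ lam j)
    {C α M δ : ℝ}
    (hM : ∀ t ∈ Ioi a, |(countingFn lam t : ℝ) - C * t ^ α| ≤ M + δ * (C * t ^ α))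
    {f : ℝ → ℝ} (hf : ContDiff ℝ 1 f) (hanti : AntitoneOn f (Ici a))
    (hd : SuperpolynomialDecay atTop id f) (hd' : SuperpolynomialDecay atTop id (deriv f)) :
    |∑' j, f (lam j) - C * (a ^ α * f a + α * ∫ t in Ioi a, f t * t ^ (α - 1))|
      ≤ M * f a + δ * (C * (a ^ α * f a + α * ∫ t in Ioi a, f t * t ^ (α - 1))) := by
  set g : ℝ → ℝ := fun t => -deriv f t
  have hg0 : ∀ t ∈ Ioi a, 0 ≤ g t := fun t ht => neg_nonneg.2 <| by
    simpa only [derivWithin_of_mem_nhds (Ici_mem_nhds (mem_Ioi.1 ht))]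
      using hanti.derivWithin_nonpos (x := t)
  have hg : IntegrableOn g (Ioi a) :=
    (hd'.integrableOn_Ioi (hf.continuous_deriv le_rfl).continuousOn).neg
  have hPg : IntegrableOn (fun t => C * t ^ α * g t) (Ioi a) :=
    (((hd'.param_rpow_mul α).integrableOn_Ioi ((continuousOn_rpow_const_Ici ha α).mul
      (hf.continuous_deriv le_rfl).continuousOn)).neg.const_mul C).congr
      (ae_of_all _ fun t => by simp only [g, Pi.neg_apply]; ring)
  have hNmeas : Measurable fun t => (countingFn lam t : ℝ) :=
    (Nat.mono_cast.comp (countingFn_mono hfin)).measurable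
  have hbound := ae_restrict_of_forall_mem (μ := volume) measurableSet_Ioi hM
  have hg0' := ae_restrict_of_forall_mem (μ := volume) measurableSet_Ioi hg0
  have hsum : ∑' j, f (lam j) = ∫ t in Ioi a, countingFn lam t * g t := by
    rw [← tsum_setIntegral_Ioi_eq_setIntegral_countingFn_mul (g := g) hfin hlam
      (hf.continuous_deriv le_rfl).neg.measurable hg0
      (integrable_mul_of_abs_sub_le hNmeas.aestronglyMeasurable hbound hg0' hg hPg)]
    exact tsum_congr fun j => (integral_Ioi_neg_deriv hf hd hd' (lam j)).symm
  have hPgval : ∫ t in Ioi a, C * t ^ α * g t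
      = C * (a ^ α * f a + α * ∫ t in Ioi a, f t * t ^ (α - 1)) := by
    simp only [g, mul_assoc C, integral_const_mul, integral_Ioi_rpow_mul_neg_deriv hf hd hd' ha]
  have h := abs_integral_mul_sub_le hNmeas.aestronglyMeasurable hbound hg0' hg hPg
  rwa [hPgval, integral_Ioi_neg_deriv hf hd hd', ← hsum] at h

/-- converse Karamata estimate: let `(λ_j)` be nondecreasing positive with
`N(λ) ∼ C λ^α`, and `f : ℝ⁺ → ℝ⁺` nonincreasing, `C¹`, with `f` and `f'` decaying faster
than any polynomial at infinity. Then for every `ε > 0` there is `K(ε) > 0`, depending on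
the counting function but not on `f`, such that
`|Σ f(λ_j) - Cα ∫_{λ₁}^∞ f(λ) λ^(α-1) dλ| ≤ K f(λ₁) + ε ∫_{λ₁}^∞ f(λ) λ^(α-1) dλ`. -/
theorem stmt_8 (lam : ℕ → ℝ) (hpos : ∀ j, 0 < lam j) (hmono : Monotone lam)
    (C α : ℝ) (hC : 0 < C) (hα : 0 < α)
    (hN : (fun t : ℝ => (Nat.card {j : ℕ | lam j ≤ t} : ℝ))
        ~[atTop] (fun t : ℝ => C * t ^ α)) :
    ∀ ε : ℝ, 0 < ε → ∃ K : ℝ, 0 < K ∧ ∀ f : ℝ → ℝ,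
      (∀ x, 0 ≤ f x) → ContDiff ℝ 1 f → AntitoneOn f (Ici 0) →
      (∀ k : ℕ, Tendsto (fun x : ℝ => x ^ k * f x) atTop (𝓝 0)) →
      (∀ k : ℕ, Tendsto (fun x : ℝ => x ^ k * deriv f x) atTop (𝓝 0)) →
      |(∑' j : ℕ, f (lam j)) - C * α * ∫ t in Ioi (lam 0), f t * t ^ (α - 1)|
        ≤ K * f (lam 0) + ε * ∫ t in Ioi (lam 0), f t * t ^ (α - 1) := by
  intro ε hε
  have ha : 0 < lam 0 := hpos 0
  have hfin : ∀ t, {j | lam j ≤ t}.Finite := finite_setOf_le_of_tendsto_countingFn <|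
    tendsto_natCast_atTop_iff.1 <| hN.symm.tendsto_atTop <|
      (tendsto_rpow_atTop hα).const_mul_atTop hC
  set δ := ε / (C * α)
  obtain ⟨M, hM0, hM⟩ := hN.exists_abs_sub_le
    ((Nat.mono_cast.comp (countingFn_mono hfin)).monotoneOn _) (fun _ _ => Nat.cast_nonneg _)
    (fun s hs t _ hst => mul_le_mul_of_nonneg_left (rpow_le_rpow hs hst hα.le) hC.le)
    (fun t ht => mul_nonneg hC.le (rpow_nonneg ht α)) (by positivity : 0 < δ)
  refine ⟨M + (1 + δ) * (C * lam 0 ^ α) + 1, by positivity, fun f hf0 hf hanti hd hd' => ?_⟩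
  have hest := abs_tsum_sub_le_of_abs_countingFn_sub_le hfin ha (fun j => hmono j.zero_le)
    (fun t ht => hM t (ha.trans ht).le) hf (hanti.mono (Ici_subset_Ici.2 ha.le)) hd hd'
  set I := ∫ t in Ioi (lam 0), f t * t ^ (α - 1)
  have hI : 0 ≤ I := setIntegral_nonneg measurableSet_Ioi fun t ht =>
    mul_nonneg (hf0 t) (rpow_nonneg (ha.trans ht).le _)
  have hεI : δ * (C * α) * I = ε * I := by rw [div_mul_cancel₀ _ (by positivity)]
  have hCf : 0 ≤ C * (lam 0 ^ α * f (lam 0)) :=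
    mul_nonneg hC.le (mul_nonneg (rpow_nonneg ha.le _) (hf0 _))
  rw [abs_le] at hest ⊢
  constructor <;> linarith [hf0 (lam 0)]
end

section
/- Karamata tauberian theorem: let μ be a positive Radon measure on [0,∞) such that ∫₀^∞ e^(−tλ) dμ(λ) ∼ A t^(−α) as t → 0⁺ for some A, α > 0. Then μ([0,λ]) ∼ (A/Γ(α+1)) λ^α as λ → ∞. -/
open Real Set Filter Asymptotics MeasureTheory Topology Polynomial

/-!
Karamata's argument. By scaling, the hypothesis gives
`t ^ α * ∫ g (e^{-tλ}) dμ(λ) → A / Γ(α) * ∫₀^∞ g (e^{-u}) u^{α-1} du` as `t → 0⁺`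
for every monomial `g x = x ^ (j + 1)`, hence for every `g x = x * p x` with `p` a polynomial.
The quantity `t ^ α * μ [0, 1/t]` is the same expression for `g = 1_{[e⁻¹, 1]}`, whose integral is
`1 / α`. Approximating `ramp x / x` uniformly by polynomials (Weierstrass), for ramps close to
this indicator, squeezes it between two polynomial kernels whose integrals are within any `ε` of
`1 / α`; the factor `x = e^{-u}` in front of `p` is what makes the uniform error integrable
against `u^{α-1}`.
-/

namespace Karamata

noncomputable def kernel (p : ℝ[X]) (u : ℝ) : ℝ :=
  exp (-u) * p.eval (exp (-u))

lemma kernel_eq_sum (p : ℝ[X]) (u : ℝ) :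
    kernel p u =
      ∑ j ∈ Finset.range (p.natDegree + 1), p.coeff j * exp (-(((j : ℝ) + 1) * u)) := by
  rw [kernel, eval_eq_sum_range, Finset.mul_sum]
  refine Finset.sum_congr rfl fun j _ => ?_
  rw [← exp_nat_mul, mul_left_comm, ← exp_add]
  ring_nf

lemma kernel_add_C (p : ℝ[X]) (c u : ℝ) : kernel (p + C c) u = kernel p u + c * exp (-u) := by
  simp only [kernel, eval_add, eval_C]; ring

lemma kernel_sub_C (p : ℝ[X]) (c u : ℝ) : kernel (p - C c) u = kernel p u - c * exp (-u) := by
  simp only [kernel, eval_sub, eval_C]; ring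

variable {α : ℝ}

lemma integrableOn_rpow_mul_exp_neg_mul (hα : 0 < α) {r : ℝ} (hr : 0 < r) :
    IntegrableOn (fun u : ℝ => u ^ (α - 1) * exp (-(r * u))) (Ioi 0) := by
  simpa [neg_mul] using
    integrableOn_rpow_mul_exp_neg_mul_rpow (p := 1) (by linarith : -1 < α - 1) one_pos hr

lemma integrableOn_rpow_mul_exp_neg (hα : 0 < α) :
    IntegrableOn (fun u : ℝ => u ^ (α - 1) * exp (-u)) (Ioi 0) := by
  simpa using integrableOn_rpow_mul_exp_neg_mul hα one_pos

lemma integrableOn_rpow_mul_kernel (hα : 0 < α) (p : ℝ[X]) :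
    IntegrableOn (fun u : ℝ => u ^ (α - 1) * kernel p u) (Ioi 0) := by
  simp_rw [kernel_eq_sum, Finset.mul_sum, mul_left_comm _ (p.coeff _)]
  exact integrable_finsetSum _ fun j _ =>
    (integrableOn_rpow_mul_exp_neg_mul hα (by positivity)).const_mul _

lemma integral_rpow_mul_kernel (hα : 0 < α) (p : ℝ[X]) :
    ∫ u in Ioi 0, u ^ (α - 1) * kernel p u =
      Gamma α * ∑ j ∈ Finset.range (p.natDegree + 1), p.coeff j * (1 / ((j : ℝ) + 1)) ^ α := by
  simp_rw [kernel_eq_sum, Finset.mul_sum, mul_left_comm _ (p.coeff _)]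
  rw [integral_finsetSum _ fun j _ =>
    (integrableOn_rpow_mul_exp_neg_mul hα (by positivity)).const_mul _]
  refine Finset.sum_congr rfl fun j _ => ?_
  rw [integral_const_mul, integral_rpow_mul_exp_neg_mul_Ioi hα (by positivity)]
  ring

lemma rpow_mul_indicator_add (α c k u : ℝ) :
    u ^ (α - 1) * ((Iic c).indicator 1 u + k * exp (-u)) =
      (Iic c).indicator (fun u => u ^ (α - 1)) u + k * (u ^ (α - 1) * exp (-u)) := by
  by_cases h : u ≤ c <;> simp [h, mul_add, mul_left_comm]

lemma integrableOn_indicator_Iic_rpow (hα : 0 < α) (c : ℝ) :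
    IntegrableOn ((Iic c).indicator fun u : ℝ => u ^ (α - 1)) (Ioi 0) := by
  rw [IntegrableOn, integrable_indicator_iff measurableSet_Iic, IntegrableOn,
    Measure.restrict_restrict measurableSet_Iic, Iic_inter_Ioi]
  exact (intervalIntegrable_iff.1 (intervalIntegral.intervalIntegrable_rpow'
    (by linarith : -1 < α - 1))).mono_set Ioc_subset_uIoc

lemma integrableOn_rpow_mul_indicator_add (hα : 0 < α) (c k : ℝ) :
    IntegrableOn (fun u : ℝ => u ^ (α - 1) * ((Iic c).indicator 1 u + k * exp (-u)))
      (Ioi 0) := by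
  simp_rw [rpow_mul_indicator_add]
  exact (integrableOn_indicator_Iic_rpow hα c).add
    ((integrableOn_rpow_mul_exp_neg hα).const_mul k)

lemma integral_rpow_mul_indicator_add (hα : 0 < α) {c : ℝ} (hc : 0 ≤ c) (k : ℝ) :
    ∫ u in Ioi 0, u ^ (α - 1) * ((Iic c).indicator 1 u + k * exp (-u)) =
      c ^ α / α + k * Gamma α := by
  have hGamma : ∫ u in Ioi 0, u ^ (α - 1) * exp (-u) = Gamma α := by
    simpa using integral_rpow_mul_exp_neg_mul_Ioi hα one_pos
  simp_rw [rpow_mul_indicator_add]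
  rw [integral_add (integrableOn_indicator_Iic_rpow hα c)
      ((integrableOn_rpow_mul_exp_neg hα).const_mul k),
    integral_const_mul, hGamma, setIntegral_indicator measurableSet_Iic, Ioi_inter_Iic,
    ← intervalIntegral.integral_of_le hc, integral_rpow (Or.inl (by linarith)), sub_add_cancel,
    zero_rpow hα.ne', sub_zero]

variable {μ : Measure ℝ}

lemma integrable_kernel_comp_mul
    (hint : ∀ t : ℝ, 0 < t → Integrable (fun x => exp (-(t * x))) μ) (p : ℝ[X]) {t : ℝ}
    (ht : 0 < t) : Integrable (fun x => kernel p (t * x)) μ := by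
  simp_rw [kernel_eq_sum, ← mul_assoc]
  exact integrable_finsetSum _ fun j _ => (hint _ (by positivity)).const_mul _

lemma tendsto_rpow_mul_integral_exp_neg_mul_mul {A : ℝ}
    (hlim : Tendsto (fun t => t ^ α * ∫ x, exp (-(t * x)) ∂μ) (𝓝[>] 0) (𝓝 A))
    {r : ℝ} (hr : 0 < r) :
    Tendsto (fun t => t ^ α * ∫ x, exp (-(r * (t * x))) ∂μ) (𝓝[>] 0)
      (𝓝 (A * (1 / r) ^ α)) := by
  have hmul : Tendsto (r * ·) (𝓝[>] (0 : ℝ)) (𝓝[>] 0) :=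
    tendsto_iff_comap.2 (comap_mulLeft_nhdsGT_zero hr).ge
  rw [mul_comm A]
  refine ((hlim.comp hmul).const_mul ((1 / r) ^ α)).congr' ?_
  filter_upwards [self_mem_nhdsWithin] with t (ht : 0 < t)
  simp only [Function.comp_apply, ← mul_assoc]
  rw [← mul_rpow (by positivity) (by positivity), one_div, inv_mul_cancel_left₀ hr.ne']

lemma tendsto_rpow_mul_integral_kernel (hα : 0 < α)
    (hint : ∀ t : ℝ, 0 < t → Integrable (fun x => exp (-(t * x))) μ) {A : ℝ}
    (hlim : Tendsto (fun t => t ^ α * ∫ x, exp (-(t * x)) ∂μ) (𝓝[>] 0) (𝓝 A)) (p : ℝ[X]) :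
    Tendsto (fun t => t ^ α * ∫ x, kernel p (t * x) ∂μ) (𝓝[>] 0)
      (𝓝 (A / Gamma α * ∫ u in Ioi 0, u ^ (α - 1) * kernel p u)) := by
  have hsum : ∀ t, 0 < t → t ^ α * ∫ x, kernel p (t * x) ∂μ =
      ∑ j ∈ Finset.range (p.natDegree + 1),
        p.coeff j * (t ^ α * ∫ x, exp (-(((j : ℝ) + 1) * (t * x))) ∂μ) := by
    intro t ht
    simp_rw [kernel_eq_sum]
    rw [integral_finsetSum _ fun j _ => ?_, Finset.mul_sum]
    · refine Finset.sum_congr rfl fun j _ => ?_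
      rw [integral_const_mul]; ring
    · simp_rw [← mul_assoc]
      exact (hint _ (by positivity)).const_mul _
  have hval : A / Gamma α * ∫ u in Ioi 0, u ^ (α - 1) * kernel p u =
      ∑ j ∈ Finset.range (p.natDegree + 1), p.coeff j * (A * (1 / ((j : ℝ) + 1)) ^ α) := by
    rw [integral_rpow_mul_kernel hα, ← mul_assoc, div_mul_cancel₀ _ (Gamma_pos_of_pos hα).ne',
      Finset.mul_sum]
    exact Finset.sum_congr rfl fun j _ => by ring
  rw [hval]
  refine (tendsto_finsetSum _ fun j _ => (tendsto_rpow_mul_integral_exp_neg_mul_mul hlim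
    (by positivity)).const_mul (p.coeff j)).congr' ?_
  filter_upwards [self_mem_nhdsWithin] with t ht
  exact (hsum t ht).symm

noncomputable def ramp (a b x : ℝ) : ℝ :=
  max 0 (min 1 ((x - a) / (b - a)))

lemma continuous_ramp (a b : ℝ) : Continuous (ramp a b) := by
  unfold ramp; fun_prop

lemma ramp_nonneg (a b x : ℝ) : 0 ≤ ramp a b x := le_max_left _ _

lemma ramp_le_one (a b x : ℝ) : ramp a b x ≤ 1 := max_le zero_le_one (min_le_left _ _)

lemma ramp_of_le {a b x : ℝ} (hab : a < b) (hx : x ≤ a) : ramp a b x = 0 :=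
  max_eq_left (min_le_of_right_le (div_nonpos_of_nonpos_of_nonneg (by linarith) (by linarith)))

lemma ramp_of_ge {a b x : ℝ} (hab : a < b) (hx : b ≤ x) : ramp a b x = 1 := by
  rw [ramp, min_eq_left ((one_le_div (by linarith)).2 (by linarith)), max_eq_right zero_le_one]

lemma exists_kernel_near_indicator {c' c ε : ℝ} (hc : c' < c) (hε : 0 < ε) :
    ∃ q : ℝ[X], ∀ u, 0 ≤ u →
      (Iic c').indicator 1 u - ε * exp (-u) ≤ kernel q u ∧
      kernel q u ≤ (Iic c).indicator 1 u + ε * exp (-u) := by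
  set a := exp (-c)
  set b := exp (-c')
  have hab : a < b := exp_lt_exp.2 (by linarith)
  have ha : 0 < a := exp_pos _
  -- `ramp a b x / max x a` is `ramp a b x / x` wherever the ramp is nonzero, and is continuous.
  obtain ⟨q, hq⟩ := exists_polynomial_near_of_continuousOn 0 1 (fun x => ramp a b x / max x a)
    ((continuous_ramp a b).div (continuous_id.max continuous_const)
      fun x => (ha.trans_le (le_max_right x a)).ne').continuousOn ε hε
  refine ⟨q, fun u hu => ?_⟩
  set x := exp (-u)
  have hx0 : 0 < x := exp_pos _
  have hramp : x * (ramp a b x / max x a) = ramp a b x := by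
    rcases le_total x a with h | h
    · simp [ramp_of_le hab h]
    · rw [max_eq_left h, mul_div_cancel₀ _ hx0.ne']
  have hclose : |kernel q u - ramp a b x| < ε * x := by
    rw [kernel, ← hramp, ← mul_sub, abs_mul, abs_of_pos hx0, mul_comm]
    exact mul_lt_mul_of_pos_right (hq x ⟨hx0.le, exp_le_one_iff.2 (by linarith)⟩) hx0
  have hlow : (Iic c').indicator 1 u ≤ ramp a b x := by
    by_cases h : u ≤ c'
    · rw [indicator_of_mem (mem_Iic.2 h), ramp_of_ge hab (exp_le_exp.2 (by linarith))]; rfl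
    · rw [indicator_of_notMem (notMem_Iic.2 (not_le.1 h))]; exact ramp_nonneg ..
  have hup : ramp a b x ≤ (Iic c).indicator 1 u := by
    by_cases h : u ≤ c
    · rw [indicator_of_mem (mem_Iic.2 h)]; exact ramp_le_one ..
    · rw [indicator_of_notMem (notMem_Iic.2 (not_le.1 h)),
        ramp_of_le hab (exp_le_exp.2 (by linarith))]
  constructor <;> linarith [abs_lt.1 hclose]

lemma tendsto_rpow_div_nhds_one (hα : 0 < α) :
    Tendsto (fun c : ℝ => c ^ α / α) (𝓝 1) (𝓝 (1 / α)) := by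
  simpa using ((continuous_rpow_const hα.le).tendsto 1).div_const α

lemma exists_kernel_le_indicator (hα : 0 < α) {b : ℝ} (hb : b < 1 / α) :
    ∃ p : ℝ[X], (∀ u, 0 ≤ u → kernel p u ≤ (Iic 1).indicator 1 u) ∧
      b < ∫ u in Ioi 0, u ^ (α - 1) * kernel p u := by
  obtain ⟨c, hbc, hc⟩ : ∃ c : ℝ, b < c ^ α / α ∧ c ∈ Ioo 0 1 :=
    ((((tendsto_rpow_div_nhds_one hα).mono_left nhdsWithin_le_nhds).eventually
      (lt_mem_nhds hb)).and (Ioo_mem_nhdsLT zero_lt_one)).exists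
  set η := (c ^ α / α - b) / (4 * Gamma α)
  have hη : 2 * η * Gamma α = (c ^ α / α - b) / 2 := by
    have := (Gamma_pos_of_pos hα).ne'
    simp only [η]; field_simp; ring
  obtain ⟨q, hq⟩ := exists_kernel_near_indicator hc.2 (by positivity : 0 < η)
  refine ⟨q - C η, fun u hu => ?_, ?_⟩
  · rw [kernel_sub_C]; linarith [(hq u hu).2]
  calc b < c ^ α / α + -(2 * η) * Gamma α := by linarith
    _ = ∫ u in Ioi 0, u ^ (α - 1) * ((Iic c).indicator 1 u + -(2 * η) * exp (-u)) :=
      (integral_rpow_mul_indicator_add hα hc.1.le _).symm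
    _ ≤ ∫ u in Ioi 0, u ^ (α - 1) * kernel (q - C η) u := by
      refine setIntegral_mono_on (integrableOn_rpow_mul_indicator_add hα _ _)
        (integrableOn_rpow_mul_kernel hα _) measurableSet_Ioi fun u hu => ?_
      refine mul_le_mul_of_nonneg_left ?_ (rpow_nonneg (le_of_lt hu) _)
      rw [kernel_sub_C]; linarith [(hq u (le_of_lt hu)).1]

lemma exists_indicator_le_kernel (hα : 0 < α) {b : ℝ} (hb : 1 / α < b) :
    ∃ p : ℝ[X], (∀ u, 0 ≤ u → (Iic 1).indicator 1 u ≤ kernel p u) ∧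
      ∫ u in Ioi 0, u ^ (α - 1) * kernel p u < b := by
  obtain ⟨c, hbc, hc⟩ : ∃ c : ℝ, c ^ α / α < b ∧ c ∈ Ioi 1 :=
    ((((tendsto_rpow_div_nhds_one hα).mono_left nhdsWithin_le_nhds).eventually
      (gt_mem_nhds hb)).and (self_mem_nhdsWithin : Ioi (1 : ℝ) ∈ 𝓝[>] 1)).exists
  set η := (b - c ^ α / α) / (4 * Gamma α)
  have hη : 2 * η * Gamma α = (b - c ^ α / α) / 2 := by
    have := (Gamma_pos_of_pos hα).ne'
    simp only [η]; field_simp; ring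
  obtain ⟨q, hq⟩ := exists_kernel_near_indicator hc (by positivity : 0 < η)
  refine ⟨q + C η, fun u hu => ?_, ?_⟩
  · rw [kernel_add_C]; linarith [(hq u hu).1]
  calc ∫ u in Ioi 0, u ^ (α - 1) * kernel (q + C η) u
      ≤ ∫ u in Ioi 0, u ^ (α - 1) * ((Iic c).indicator 1 u + 2 * η * exp (-u)) := by
        refine setIntegral_mono_on (integrableOn_rpow_mul_kernel hα _)
          (integrableOn_rpow_mul_indicator_add hα _ _) measurableSet_Ioi fun u hu => ?_
        refine mul_le_mul_of_nonneg_left ?_ (rpow_nonneg (le_of_lt hu) _)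
        rw [kernel_add_C]; linarith [(hq u (le_of_lt hu)).2]
    _ = c ^ α / α + 2 * η * Gamma α :=
      integral_rpow_mul_indicator_add hα (zero_le_one.trans hc.out.le) _
    _ < b := by linarith

lemma measure_Iic_lt_top_of_integrable_exp_neg (h : Integrable (fun x => exp (-x)) μ)
    (c : ℝ) : μ (Iic c) < ⊤ := by
  refine (measure_mono fun x (hx : x ≤ c) => ?_).trans_lt
    (h.measure_norm_ge_lt_top (exp_pos (-c)))
  rw [mem_ofPred_eq, norm_of_nonneg (exp_pos _).le]
  exact exp_le_exp.2 (neg_le_neg hx)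

lemma indicator_Iic_one_mul {t : ℝ} (ht : 0 < t) (x : ℝ) :
    (Iic 1).indicator (1 : ℝ → ℝ) (t * x) = (Iic t⁻¹).indicator 1 x := by
  have hiff : t * x ≤ 1 ↔ x ≤ t⁻¹ := by rw [← le_div_iff₀' ht, one_div]
  simp only [indicator_apply, mem_Iic, hiff, Pi.one_apply]

lemma integral_comp_mul_le_measureReal_Iic_inv (hae : ∀ᵐ x ∂μ, 0 ≤ x) {t : ℝ} (ht : 0 < t)
    (hfin : μ (Iic t⁻¹) ≠ ⊤) {φ : ℝ → ℝ} (hφ : Integrable (fun x => φ (t * x)) μ)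
    (hle : ∀ u, 0 ≤ u → φ u ≤ (Iic 1).indicator 1 u) :
    ∫ x, φ (t * x) ∂μ ≤ μ.real (Iic t⁻¹) := by
  rw [← integral_indicator_one measurableSet_Iic]
  refine integral_mono_ae hφ ((integrable_indicator_iff measurableSet_Iic).2
    (integrableOn_const hfin)) ?_
  filter_upwards [hae] with x hx
  rw [← indicator_Iic_one_mul ht]
  exact hle _ (mul_nonneg ht.le hx)

lemma measureReal_Iic_inv_le_integral_comp_mul (hae : ∀ᵐ x ∂μ, 0 ≤ x) {t : ℝ} (ht : 0 < t)
    (hfin : μ (Iic t⁻¹) ≠ ⊤) {φ : ℝ → ℝ} (hφ : Integrable (fun x => φ (t * x)) μ)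
    (hle : ∀ u, 0 ≤ u → (Iic 1).indicator 1 u ≤ φ u) :
    μ.real (Iic t⁻¹) ≤ ∫ x, φ (t * x) ∂μ := by
  rw [← integral_indicator_one measurableSet_Iic]
  refine integral_mono_ae ((integrable_indicator_iff measurableSet_Iic).2
    (integrableOn_const hfin)) hφ ?_
  filter_upwards [hae] with x hx
  rw [← indicator_Iic_one_mul ht]
  exact hle _ (mul_nonneg ht.le hx)

theorem tendsto_rpow_mul_measureReal_Iic_inv (hα : 0 < α) {A : ℝ} (hA : 0 < A)
    (hae : ∀ᵐ x ∂μ, 0 ≤ x) (hint : ∀ t : ℝ, 0 < t → Integrable (fun x => exp (-(t * x))) μ)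
    (hlim : Tendsto (fun t => t ^ α * ∫ x, exp (-(t * x)) ∂μ) (𝓝[>] 0) (𝓝 A)) :
    Tendsto (fun t => t ^ α * μ.real (Iic t⁻¹)) (𝓝[>] 0) (𝓝 (A / Gamma (α + 1))) := by
  have hfin : ∀ c, μ (Iic c) ≠ ⊤ := fun c =>
    (measure_Iic_lt_top_of_integrable_exp_neg (by simpa using hint 1 one_pos) c).ne
  have hA' : 0 < A / Gamma α := div_pos hA (Gamma_pos_of_pos hα)
  have hval : A / Gamma (α + 1) = A / Gamma α * (1 / α) := by
    rw [Gamma_add_one hα.ne']; field_simp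
  rw [hval, tendsto_order]
  constructor
  · intro b hb
    obtain ⟨p, hp, hpb⟩ := exists_kernel_le_indicator hα ((div_lt_iff₀' hA').2 hb)
    filter_upwards [(tendsto_rpow_mul_integral_kernel hα hint hlim p).eventually
      (lt_mem_nhds ((div_lt_iff₀' hA').1 hpb)), self_mem_nhdsWithin] with t hbt (ht : 0 < t)
    refine hbt.trans_le (mul_le_mul_of_nonneg_left ?_ (by positivity))
    exact integral_comp_mul_le_measureReal_Iic_inv hae ht (hfin _)
      (integrable_kernel_comp_mul hint p ht) hp
  · intro b hb
    obtain ⟨p, hp, hpb⟩ := exists_indicator_le_kernel hα ((lt_div_iff₀' hA').2 hb)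
    filter_upwards [(tendsto_rpow_mul_integral_kernel hα hint hlim p).eventually
      (gt_mem_nhds ((lt_div_iff₀' hA').1 hpb)), self_mem_nhdsWithin] with t hbt (ht : 0 < t)
    refine lt_of_le_of_lt (mul_le_mul_of_nonneg_left ?_ (by positivity)) hbt
    exact measureReal_Iic_inv_le_integral_comp_mul hae ht (hfin _)
      (integrable_kernel_comp_mul hint p ht) hp

end Karamata

lemma Asymptotics.IsEquivalent.tendsto_rpow_mul {f : ℝ → ℝ} {A α : ℝ}
    (h : f ~[𝓝[>] 0] fun t => A * t ^ (-α)) :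
    Tendsto (fun t => t ^ α * f t) (𝓝[>] 0) (𝓝 A) := by
  refine ((IsEquivalent.refl (u := fun t : ℝ => t ^ α)).mul h).tendsto_nhds_iff.2
    (tendsto_const_nhds.congr' ?_)
  filter_upwards [self_mem_nhdsWithin] with t (ht : 0 < t)
  rw [Pi.mul_apply, mul_left_comm, rpow_neg ht.le, mul_inv_cancel₀ (by positivity), mul_one]

lemma isEquivalent_mul_rpow_of_tendsto {f : ℝ → ℝ} {l α : ℝ} (hl : l ≠ 0)
    (h : Tendsto (fun t => t ^ α * f t⁻¹) (𝓝[>] 0) (𝓝 l)) :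
    f ~[atTop] fun x => l * x ^ α := by
  have hconst := (isEquivalent_const_iff_tendsto hl).2 (h.comp tendsto_inv_atTop_nhdsGT_zero)
  refine (hconst.mul (IsEquivalent.refl (u := fun x : ℝ => x ^ α))).congr_left ?_
  filter_upwards [eventually_gt_atTop 0] with x (hx : 0 < x)
  simp only [Function.comp_apply, Pi.mul_apply, inv_inv, inv_rpow hx.le]
  rw [mul_right_comm, inv_mul_cancel₀ (by positivity), one_mul]

/-- Karamata tauberian theorem: if `μ` is a positive Radon measure on
`[0,∞)` whose Laplace transform satisfies `∫ e^(-tλ) dμ(λ) ∼ A t^(-α)` as `t → 0⁺`,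
then `μ([0,λ]) ∼ (A/Γ(α+1)) λ^α` as `λ → ∞`. -/
theorem stmt_9 (μ : Measure ℝ) (hsupp : μ (Iio 0) = 0)
    (A α : ℝ) (hA : 0 < A) (hα : 0 < α)
    (hint : ∀ t : ℝ, 0 < t → Integrable (fun lam => Real.exp (-t * lam)) μ)
    (hL : (fun t : ℝ => ∫ lam, Real.exp (-t * lam) ∂μ)
        ~[𝓝[>] (0:ℝ)] (fun t : ℝ => A * t ^ (-α))) :
    (fun lam : ℝ => (μ (Iic lam)).toReal)
      ~[atTop] (fun lam : ℝ => A / Real.Gamma (α + 1) * lam ^ α) := by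
  simp only [neg_mul] at hint hL
  have hae : ∀ᵐ x ∂μ, 0 ≤ x :=
    (measure_eq_zero_iff_ae_notMem.1 hsupp).mono fun _ hx => not_lt.1 hx
  exact isEquivalent_mul_rpow_of_tendsto (div_pos hA (Gamma_pos_of_pos (by linarith))).ne'
    (Karamata.tendsto_rpow_mul_measureReal_Iic_inv hα hA hae hint hL.tendsto_rpow_mul)
end
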